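/- The number of planar diagrams on N strands with exactly k through-strands (bottom-to-top connections), where k ≡ N mod 2, is (binomial(N, (N-k)/2) - binomial(N, (N-k)/2 - 1))², and summing over k recovers the Catalan number C_N. -/

import Mathlib

/-!
Reading the boundary of the rectangle counterclockwise turns a diagram on `N` strands into a
noncrossing perfect matching of `2N` points on a line, and its through-strands into the arcs
crossing the cut between the first `N` and the last `N` points.

Cutting a noncrossing matching of `n + m` points at position `n` leaves noncrossing partial
matchings of `n` and of `m` points whose unmatched points lie under no arc. The matching is
recovered from the two halves and the number `t` of arcs across the cut: these arcs join the `t`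
highest unmatched points on the left to the `t` lowest unmatched points on the right, nested.
For `m = 1` this gives the ballot recursion `B(n+1, k) = B(n, k-1) + B(n, k+1)` for the number
`B(n, k)` of partial matchings with `k` unmatched points, hence the closed form
`B(n, k) = C(n, j) - C(n, j-1)` with `n = k + 2j`; for `n = m = N` with no unmatched points it
gives `B(N, k)²` diagrams with `k` through-strands. Summing over `k` counts all noncrossing
perfect matchings of `2N` points, `B(2N, 0) = C(2N, N) - C(2N, N-1)`, the Catalan number.
-/

/-- The circular position of a point of a planar diagram on `N` strands: the `2*N`
boundary points consist of `N` bottom points (indices `0,…,N-1`, left to right) and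
`N` top points (indices `N,…,2*N-1`, left to right); going around the boundary of the
rectangle one meets the bottom points left to right and then the top points right to
left. -/
def diagPos (N : ℕ) (a : Fin (2*N)) : ℕ :=
  if (a : ℕ) < N then (a : ℕ) else 3*N - 1 - (a : ℕ)

/-- A planar diagram on `N` strands (without closed loops): a noncrossing perfect
matching of the `N` bottom and `N` top boundary points, i.e. a fixed-point-free
involution of the `2*N` boundary points whose chords do not cross in the disk
(no `a, b, c, d` with circular positions `pos a < pos c < pos b < pos d` and
`a` matched to `b`, `c` matched to `d`). -/
def IsDiagram (N : ℕ) (m : Fin (2*N) → Fin (2*N)) : Prop :=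
  (∀ a, m a ≠ a) ∧ (∀ a, m (m a) = a) ∧
  ∀ a b c d : Fin (2*N),
    diagPos N a < diagPos N c → diagPos N c < diagPos N b → diagPos N b < diagPos N d →
    m a = b → m c = d → False

/-- One step along a strand in the two-layer stack of diagrams `m1` (bottom layer) and
`m2` (top layer): follow an edge of `m1`, follow an edge of `m2`, or cross the glued
middle interface (top point `N + j` of the bottom layer is glued to bottom point `j`
of the top layer). -/
def layerStep (N : ℕ) (m1 m2 : Fin (2*N) → Fin (2*N)) :
    (Fin (2*N) ⊕ Fin (2*N)) → (Fin (2*N) ⊕ Fin (2*N)) → Prop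
  | .inl p, .inl q => m1 p = q ∨ m1 q = p
  | .inr p, .inr q => m2 p = q ∨ m2 q = p
  | .inl p, .inr q => (p : ℕ) = (q : ℕ) + N
  | .inr p, .inl q => (q : ℕ) = (p : ℕ) + N

/-- Two points of the two-layer stack are connected if some path of strand segments
joins them. -/
def Conn (N : ℕ) (m1 m2 : Fin (2*N) → Fin (2*N))
    (x y : Fin (2*N) ⊕ Fin (2*N)) : Prop :=
  Relation.ReflTransGen (layerStep N m1 m2) x y

/-- The outer boundary point of the stacked diagram corresponding to `a`: bottom
points live on the bottom layer, top points on the top layer. -/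
def outer (N : ℕ) (a : Fin (2*N)) : Fin (2*N) ⊕ Fin (2*N) :=
  if (a : ℕ) < N then Sum.inl a else Sum.inr a

/-- Composition (vertical stacking) of planar diagrams: the composite matches `a`
to the (unique, for genuine diagrams) other outer point connected to it by a path
through the stack. -/
noncomputable def diagComp (N : ℕ) (m1 m2 : Fin (2*N) → Fin (2*N)) :
    Fin (2*N) → Fin (2*N) :=
  open scoped Classical in
  fun a => if h : ∃ b, b ≠ a ∧ Conn N m1 m2 (outer N a) (outer N b) then h.choose else a

/-- The identity diagram: `N` through-strands, matching bottom point `i` with top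
point `N + i`. -/
def idDiag (N : ℕ) (a : Fin (2*N)) : Fin (2*N) :=
  if h : (a : ℕ) < N then ⟨(a : ℕ) + N, by omega⟩
  else ⟨(a : ℕ) - N, by have := a.isLt; omega⟩

/-- A point of the stack lying on a closed loop: it is connected to no outer
boundary point. -/
def IsLoopPoint (N : ℕ) (m1 m2 : Fin (2*N) → Fin (2*N))
    (x : Fin (2*N) ⊕ Fin (2*N)) : Prop :=
  ∀ a : Fin (2*N), ¬ Conn N m1 m2 x (outer N a)

/-- The number of closed loops produced when stacking `m2` on top of `m1`: the number
of connected components of loop points. -/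
noncomputable def numLoops (N : ℕ) (m1 m2 : Fin (2*N) → Fin (2*N)) : ℕ :=
  Nat.card (Quot (fun x y : {x // IsLoopPoint N m1 m2 x} => Conn N m1 m2 x.1 y.1))

/-- The `i`-th Temperley–Lieb generator diagram (`1 ≤ i ≤ N-1`), as a function on
indices: it pairs bottom points `i-1, i` together (0-indexed: the `i`-th and
`(i+1)`-st bottom points), pairs top points `N+i-1, N+i` together, and pairs bottom
`j` with top `N+j` otherwise. -/
def genDiagNat (N i a : ℕ) : ℕ :=
  if a = i - 1 then i
  else if a = i then i - 1
  else if a = N + i - 1 then N + i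
  else if a = N + i then N + i - 1
  else if a < N then a + N else a - N

/-- The `i`-th Temperley–Lieb generator diagram on `N` strands. -/
def genDiag (N i : ℕ) (a : Fin (2*N)) : Fin (2*N) :=
  ⟨genDiagNat N i (a : ℕ) % (2*N), Nat.mod_lt _ a.pos⟩

/-- The number of through-strands (bottom-to-top connections) of a planar diagram. -/
def throughCount (N : ℕ) (m : Fin (2*N) → Fin (2*N)) : ℕ :=
  (Finset.univ.filter
    (fun a : Fin (2*N) => (a : ℕ) < N ∧ N ≤ ((m a : Fin (2*N)) : ℕ))).card


open Finset Function

section Noncrossing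

variable {α β : Type*} [LinearOrder α] [LinearOrder β]

/-- A noncrossing partial matching whose unmatched points lie under no arc, encoded as an
involution fixing exactly the unmatched points: every point strictly inside an arc is matched,
and to a point inside the same arc. -/
structure IsNoncrossing (f : α → α) : Prop where
  involutive : Involutive f
  nested : ∀ a, ∀ c ∈ Set.Ioo a (f a), f c ≠ c ∧ f c ∈ Set.Ioo a (f a)

instance [Fintype α] : DecidablePred (IsNoncrossing : (α → α) → Prop) := fun f =>
  decidable_of_iff ((∀ a, f (f a) = a) ∧
      ∀ a, ∀ c ∈ Set.Ioo a (f a), f c ≠ c ∧ f c ∈ Set.Ioo a (f a))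
    ⟨fun h => ⟨h.1, h.2⟩, fun h => ⟨h.involutive, h.nested⟩⟩

variable {f : α → α} {a b : α}

lemma isNoncrossing_id : IsNoncrossing (id : α → α) :=
  ⟨fun _ => rfl, fun a _ hc => absurd (hc.1.trans hc.2) (lt_irrefl a)⟩

lemma IsNoncrossing.notMem_Ioo_of_apply_eq_self (hf : IsNoncrossing f) (hb : f b = b) :
    b ∉ Set.Ioo a (f a) :=
  fun h => (hf.nested a b h).1 hb

lemma IsNoncrossing.lt_apply_of_lt (hf : IsNoncrossing f) (ha : f a = a) (hab : a < b) :
    a < f b := by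
  by_contra! h
  rcases h.lt_or_eq with h | h
  · exact hf.notMem_Ioo_of_apply_eq_self ha ⟨h, by rwa [hf.involutive]⟩
  · exact hab.ne (by rw [← hf.involutive b, h, ha])

lemma IsNoncrossing.apply_lt_of_lt (hf : IsNoncrossing f) (hb : f b = b) (hab : a < b) :
    f a < b := by
  by_contra! h
  rcases h.lt_or_eq with h | h
  · exact hf.notMem_Ioo_of_apply_eq_self hb ⟨hab, h⟩
  · exact hab.ne (by rw [← hf.involutive a, ← h, hb])

lemma isNoncrossing_iff_of_forall_ne (hne : ∀ a, f a ≠ a) :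
    IsNoncrossing f ↔ Involutive f ∧ ∀ a c, a < c → c < f a → f a < f c → False := by
  refine ⟨fun hf => ⟨hf.involutive, fun a c hac hca hac' => ?_⟩,
    fun ⟨hinv, hnc⟩ => ⟨hinv, fun a c ⟨hac, hca⟩ => ⟨hne c, ?_, ?_⟩⟩⟩
  · exact (hf.nested a c ⟨hac, hca⟩).2.2.not_gt hac'
  · by_contra! h
    rcases h.lt_or_eq with h | h
    · exact hnc (f c) a h (by rwa [hinv]) (by rwa [hinv])
    · exact hca.ne (by rw [← h, hinv])
  · by_contra! h
    rcases h.lt_or_eq with h | h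
    · exact hnc a c hac hca h
    · exact hac.ne (hinv.injective h)

noncomputable def restrictMatching (e : β ↪o α) (f : α → α) (b : β) : β :=
  open Classical in if h : ∃ b', e b' = f (e b) then h.choose else b

variable {e : β ↪o α}

lemma restrictMatching_of_eq {b b' : β} (h : f (e b) = e b') : restrictMatching e f b = b' := by
  have hex : ∃ b', e b' = f (e b) := ⟨b', h.symm⟩
  rw [restrictMatching, dif_pos hex]
  exact e.injective (hex.choose_spec.trans h)

lemma restrictMatching_of_notMem {b : β} (h : f (e b) ∉ Set.range e) :
    restrictMatching e f b = b := by
  rw [restrictMatching, dif_neg fun ⟨b', hb'⟩ => h ⟨b', hb'⟩]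

lemma restrictMatching_eq_self_iff {b : β} :
    restrictMatching e f b = b ↔ f (e b) = e b ∨ f (e b) ∉ Set.range e := by
  by_cases h : f (e b) ∈ Set.range e
  · obtain ⟨b', hb'⟩ := h
    rw [restrictMatching_of_eq hb'.symm, ← hb']
    simp
  · simp [restrictMatching_of_notMem h, h]

lemma IsNoncrossing.restrict (hf : IsNoncrossing f) (he : (Set.range e).OrdConnected) :
    IsNoncrossing (restrictMatching e f) := by
  have hinv : Involutive (restrictMatching e f) := by
    intro b
    by_cases h : f (e b) ∈ Set.range e
    · obtain ⟨b', hb'⟩ := h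
      rw [restrictMatching_of_eq hb'.symm]
      exact restrictMatching_of_eq (by rw [hb', hf.involutive])
    · rw [restrictMatching_of_notMem h, restrictMatching_of_notMem h]
  refine ⟨hinv, fun b c ⟨hbc, hcb⟩ => ?_⟩
  have hb : f (e b) = e (restrictMatching e f b) := by
    by_cases h : f (e b) ∈ Set.range e
    · obtain ⟨b', hb'⟩ := h
      rw [← hb', restrictMatching_of_eq hb'.symm]
    · rw [restrictMatching_of_notMem h] at hcb
      exact absurd hcb (lt_asymm hbc)
  obtain ⟨hne, hlo, hhi⟩ :=
    hf.nested _ _ ⟨e.strictMono hbc, hb ▸ e.strictMono hcb⟩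
  obtain ⟨c', hc'⟩ : f (e c) ∈ Set.range e :=
    he.out (Set.mem_range_self b) (hb ▸ Set.mem_range_self _) ⟨hlo.le, hhi.le⟩
  rw [restrictMatching_of_eq hc'.symm]
  rw [← hc'] at hne hlo hhi
  rw [hb] at hhi
  exact ⟨fun h => hne (h ▸ rfl), e.lt_iff_lt.1 hlo, e.lt_iff_lt.1 hhi⟩

end Noncrossing

section Rank

variable {α : Type*} [LinearOrder α] {s : Finset α} {x y : α}

lemma card_filter_lt_lt_of_lt (hx : x ∈ s) (hxy : x < y) :
    #{z ∈ s | z < x} < #{z ∈ s | z < y} := by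
  refine card_lt_card ((ssubset_iff_of_subset fun z hz => ?_).2 ⟨x, ?_, ?_⟩)
  · simp only [mem_filter] at hz ⊢
    exact ⟨hz.1, hz.2.trans hxy⟩
  · simp [hx, hxy]
  · simp

lemma card_filter_lt_lt_iff (hx : x ∈ s) (hy : y ∈ s) :
    #{z ∈ s | z < x} < #{z ∈ s | z < y} ↔ x < y := by
  refine ⟨fun h => ?_, card_filter_lt_lt_of_lt hx⟩
  by_contra! hyx
  rcases hyx.lt_or_eq with hyx | rfl
  · exact lt_asymm h (card_filter_lt_lt_of_lt hy hyx)
  · exact lt_irrefl _ h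

lemma card_filter_lt_injOn : Set.InjOn (fun x => #{z ∈ s | z < x}) s := by
  intro x hx y hy h
  by_contra hne
  rcases lt_or_gt_of_ne hne with hxy | hxy
  · exact (card_filter_lt_lt_of_lt hx hxy).ne h
  · exact (card_filter_lt_lt_of_lt hy hxy).ne' h

lemma card_filter_lt_lt_card (hx : x ∈ s) : #{z ∈ s | z < x} < #s :=
  card_lt_card (filter_ssubset.2 ⟨x, hx, lt_irrefl x⟩)

lemma card_filter_lt_add_card_filter_gt (hx : x ∈ s) :
    #{z ∈ s | z < x} + #{z ∈ s | x < z} + 1 = #s := by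
  have hsplit : {z ∈ s | ¬ z < x} = insert x {z ∈ s | x < z} := by
    ext z
    simp only [mem_filter, mem_insert, not_lt]
    constructor
    · rintro ⟨hz, hxz⟩
      rcases hxz.lt_or_eq with h | h
      · exact Or.inr ⟨hz, h⟩
      · exact Or.inl h.symm
    · rintro (rfl | ⟨hz, h⟩)
      · exact ⟨hx, le_rfl⟩
      · exact ⟨hz, h.le⟩
  rw [← card_filter_add_card_filter_not (s := s) (· < x), hsplit,
    card_insert_of_notMem (by simp), add_assoc]

lemma exists_card_filter_lt_eq {i : ℕ} (hi : i < #s) : ∃ x ∈ s, #{z ∈ s | z < x} = i := by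
  obtain ⟨x, hx, h⟩ := surj_on_of_inj_on_of_card_le (t := range #s)
    (fun x _ => #{z ∈ s | z < x}) (fun x hx => mem_range.2 (card_filter_lt_lt_card hx))
    (fun x y hx hy h => card_filter_lt_injOn hx hy h) (by simp) i (mem_range.2 hi)
  exact ⟨x, hx, h.symm⟩

lemma card_filter_card_le_card_filter_lt_add {t : ℕ} (ht : t ≤ #s) :
    #{x ∈ s | #s ≤ #{z ∈ s | z < x} + t} = t := by
  have hlow : #{x ∈ s | #{z ∈ s | z < x} < #s - t} = #(range (#s - t)) := by
    refine card_nbij (fun x => #{z ∈ s | z < x}) (fun x hx => ?_)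
      (card_filter_lt_injOn.mono fun x hx => (mem_filter.1 hx).1) (fun i hi => ?_)
    · exact mem_range.2 (mem_filter.1 hx).2
    · obtain ⟨x, hx, rfl⟩ := exists_card_filter_lt_eq (s := s) (i := i)
        (by simp at hi; omega)
      exact ⟨x, mem_filter.2 ⟨hx, by simpa using hi⟩, rfl⟩
  have := card_filter_add_card_filter_not (s := s) (fun x => #{z ∈ s | z < x} < #s - t)
  rw [hlow, card_range] at this
  rw [filter_congr (q := fun x => ¬ #{z ∈ s | z < x} < #s - t) (fun x _ => by omega)]
  omega

end Rank

section FreePoints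

variable {α : Type*} [Fintype α] [DecidableEq α]

def freePoints (f : α → α) : Finset α := {a | f a = a}

@[simp] lemma mem_freePoints {f : α → α} {a : α} : a ∈ freePoints f ↔ f a = a := by
  simp [freePoints]

def freeRank [LinearOrder α] (f : α → α) (x : α) : ℕ := #{z ∈ freePoints f | z < x}

end FreePoints

section Cut

variable {n m : ℕ}

lemma card_filter_fin_add (P : Fin (n + m) → Prop) [DecidablePred P] :
    #{v | P v} = #{x : Fin n | P (Fin.castAdd m x)} + #{y : Fin m | P (Fin.natAdd n y)} := by
  simp only [card_filter, Fin.sum_univ_add]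

lemma card_filter_castAdd (P : Fin (n + m) → Prop) [DecidablePred P]
    (hP : ∀ v, P v → (v : ℕ) < n) : #{v | P v} = #{x : Fin n | P (Fin.castAdd m x)} := by
  rw [card_filter_fin_add, add_eq_left, card_eq_zero, filter_eq_empty_iff]
  exact fun y _ hy => by simpa using hP _ hy

lemma card_filter_natAdd (P : Fin (n + m) → Prop) [DecidablePred P]
    (hP : ∀ v, P v → n ≤ (v : ℕ)) : #{v | P v} = #{y : Fin m | P (Fin.natAdd n y)} := by
  rw [card_filter_fin_add, add_eq_right, card_eq_zero, filter_eq_empty_iff]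
  exact fun x _ hx => by have := hP _ hx; simp at this; omega

lemma mem_range_castAddOrderEmb {v : Fin (n + m)} :
    v ∈ Set.range (Fin.castAddOrderEmb m) ↔ (v : ℕ) < n := by
  refine ⟨?_, fun h => ⟨⟨v, h⟩, Fin.ext (by simp)⟩⟩
  rintro ⟨x, rfl⟩
  simp

lemma mem_range_natAddOrderEmb {v : Fin (n + m)} :
    v ∈ Set.range (Fin.natAddOrderEmb n) ↔ n ≤ (v : ℕ) := by
  refine ⟨?_, fun h => ⟨⟨v - n, by omega⟩, Fin.ext (by simp; omega)⟩⟩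
  rintro ⟨y, rfl⟩
  simp

lemma ordConnected_range_castAddOrderEmb :
    (Set.range (Fin.castAddOrderEmb m : Fin n ↪o Fin (n + m))).OrdConnected :=
  ⟨fun _ _ _ hb _ hc => mem_range_castAddOrderEmb.2
    (lt_of_le_of_lt (Fin.le_def.1 hc.2) (mem_range_castAddOrderEmb.1 hb))⟩

lemma ordConnected_range_natAddOrderEmb :
    (Set.range (Fin.natAddOrderEmb n : Fin m ↪o Fin (n + m))).OrdConnected :=
  ⟨fun _ ha _ _ _ hc => mem_range_natAddOrderEmb.2
    (le_trans (mem_range_natAddOrderEmb.1 ha) (Fin.le_def.1 hc.1))⟩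

noncomputable def cutLeft (f : Fin (n + m) → Fin (n + m)) : Fin n → Fin n :=
  restrictMatching (Fin.castAddOrderEmb m) f

noncomputable def cutRight (f : Fin (n + m) → Fin (n + m)) : Fin m → Fin m :=
  restrictMatching (Fin.natAddOrderEmb n) f

def crossCount (f : Fin (n + m) → Fin (n + m)) : ℕ :=
  #{v : Fin (n + m) | (v : ℕ) < n ∧ n ≤ (f v : ℕ)}

variable {f : Fin (n + m) → Fin (n + m)} {x z : Fin n} {y u : Fin m}

lemma crossCount_eq_card_left (f : Fin (n + m) → Fin (n + m)) :
    crossCount f = #{x : Fin n | n ≤ (f (Fin.castAdd m x) : ℕ)} := by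
  rw [crossCount, card_filter_castAdd _ fun _ h => h.1]
  simp

lemma crossCount_eq_card_right (hf : Involutive f) :
    crossCount f = #{y : Fin m | (f (Fin.natAdd n y) : ℕ) < n} := by
  have hswap : crossCount f = #{v : Fin (n + m) | n ≤ (v : ℕ) ∧ (f v : ℕ) < n} :=
    card_nbij' f f (fun v hv => by simp_all [hf v]) (fun v hv => by simp_all [hf v])
      (fun v _ => hf v) (fun v _ => hf v)
  rw [hswap, card_filter_natAdd _ fun _ h => h.1]
  simp

lemma cutLeft_of_eq (h : f (Fin.castAdd m x) = Fin.castAdd m z) : cutLeft f x = z :=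
  restrictMatching_of_eq h

lemma cutLeft_of_le (h : n ≤ (f (Fin.castAdd m x) : ℕ)) : cutLeft f x = x :=
  restrictMatching_of_notMem (by rw [mem_range_castAddOrderEmb, Fin.castAddOrderEmb_apply]; omega)

lemma cutLeft_eq_self_iff :
    cutLeft f x = x ↔
      f (Fin.castAdd m x) = Fin.castAdd m x ∨ n ≤ (f (Fin.castAdd m x) : ℕ) := by
  rw [cutLeft, restrictMatching_eq_self_iff, mem_range_castAddOrderEmb, not_lt]
  rfl

lemma cutRight_of_eq (h : f (Fin.natAdd n y) = Fin.natAdd n u) : cutRight f y = u :=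
  restrictMatching_of_eq h

lemma cutRight_of_lt (h : (f (Fin.natAdd n y) : ℕ) < n) : cutRight f y = y :=
  restrictMatching_of_notMem (by rw [mem_range_natAddOrderEmb, Fin.natAddOrderEmb_apply]; omega)

lemma cutRight_eq_self_iff :
    cutRight f y = y ↔
      f (Fin.natAdd n y) = Fin.natAdd n y ∨ (f (Fin.natAdd n y) : ℕ) < n := by
  rw [cutRight, restrictMatching_eq_self_iff, mem_range_natAddOrderEmb, not_le]
  rfl

lemma card_freePoints_cutLeft :
    #(freePoints (cutLeft f)) =
      #{x : Fin n | f (Fin.castAdd m x) = Fin.castAdd m x} + crossCount f := by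
  rw [freePoints, filter_congr fun x _ => cutLeft_eq_self_iff (f := f) (x := x), filter_or,
    card_union_of_disjoint (disjoint_filter.2 fun x _ hx => by rw [hx]; simp),
    crossCount_eq_card_left]

lemma card_freePoints_cutRight (hf : Involutive f) :
    #(freePoints (cutRight f)) =
      #{y : Fin m | f (Fin.natAdd n y) = Fin.natAdd n y} + crossCount f := by
  rw [freePoints, filter_congr fun y _ => cutRight_eq_self_iff (f := f) (y := y), filter_or,
    card_union_of_disjoint (disjoint_filter.2 fun y _ hy => by rw [hy]; simp),
    crossCount_eq_card_right hf]

lemma card_freePoints_add_two_mul_crossCount (hf : Involutive f) :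
    #(freePoints f) + 2 * crossCount f =
      #(freePoints (cutLeft f)) + #(freePoints (cutRight f)) := by
  rw [card_freePoints_cutLeft, card_freePoints_cutRight hf, freePoints, card_filter_fin_add]
  ring

lemma crossCount_le_card_freePoints_cutLeft : crossCount f ≤ #(freePoints (cutLeft f)) := by
  rw [card_freePoints_cutLeft]
  omega

lemma crossCount_le_card_freePoints_cutRight (hf : Involutive f) :
    crossCount f ≤ #(freePoints (cutRight f)) := by
  rw [card_freePoints_cutRight hf]
  omega

lemma crossCount_le (hf : Involutive f) : crossCount f ≤ m :=
  (crossCount_le_card_freePoints_cutRight hf).trans ((card_le_univ _).trans (by simp))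

end Cut

section Glue

variable {n m : ℕ} {L : Fin n → Fin n} {R : Fin m → Fin m} {t : ℕ}
  {x x' z : Fin n} {y y' u : Fin m}

/-- `x` and `y` are joined by a strand of `glue L R t`: the `t` highest free points of `L` are
joined to the `t` lowest free points of `R`, the highest to the lowest and so on outwards. -/
structure IsThroughPair (L : Fin n → Fin n) (R : Fin m → Fin m) (t : ℕ)
    (x : Fin n) (y : Fin m) : Prop where
  mem_left : x ∈ freePoints L
  mem_right : y ∈ freePoints R
  freeRank_add : freeRank L x + freeRank R y + 1 = #(freePoints L)
  freeRank_lt : freeRank R y < t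

instance : DecidableRel (IsThroughPair L R t) := fun x y =>
  decidable_of_iff (x ∈ freePoints L ∧ y ∈ freePoints R ∧
      freeRank L x + freeRank R y + 1 = #(freePoints L) ∧ freeRank R y < t)
    ⟨fun ⟨h₁, h₂, h₃, h₄⟩ => ⟨h₁, h₂, h₃, h₄⟩,
      fun ⟨h₁, h₂, h₃, h₄⟩ => ⟨h₁, h₂, h₃, h₄⟩⟩

lemma IsThroughPair.right_unique (h : IsThroughPair L R t x y)
    (h' : IsThroughPair L R t x y') : y = y' :=
  card_filter_lt_injOn h.mem_right h'.mem_right (show freeRank R y = freeRank R y' by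
    have := h.freeRank_add; have := h'.freeRank_add; omega)

lemma IsThroughPair.left_unique (h : IsThroughPair L R t x y)
    (h' : IsThroughPair L R t x' y) : x = x' :=
  card_filter_lt_injOn h.mem_left h'.mem_left (show freeRank L x = freeRank L x' by
    have := h.freeRank_add; have := h'.freeRank_add; omega)

lemma IsThroughPair.lt_iff_lt (h : IsThroughPair L R t x y) (h' : IsThroughPair L R t x' y') :
    x < x' ↔ y' < y := by
  rw [← card_filter_lt_lt_iff h.mem_left h'.mem_left,
    ← card_filter_lt_lt_iff h'.mem_right h.mem_right]
  change freeRank L x < freeRank L x' ↔ freeRank R y' < freeRank R y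
  have := h.freeRank_add; have := h'.freeRank_add
  omega

lemma exists_isThroughPair_iff_left (htR : t ≤ #(freePoints R)) :
    (∃ y, IsThroughPair L R t x y) ↔
      x ∈ freePoints L ∧ #(freePoints L) ≤ freeRank L x + t := by
  refine ⟨fun ⟨y, hx, _, hsum, hlt⟩ => ⟨hx, by omega⟩, fun ⟨hx, hle⟩ => ?_⟩
  have hlt : freeRank L x < #(freePoints L) := card_filter_lt_lt_card hx
  obtain ⟨y, hy, hrank⟩ := exists_card_filter_lt_eq (s := freePoints R)
    (i := #(freePoints L) - freeRank L x - 1) (by omega)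
  change freeRank R y = _ at hrank
  exact ⟨y, ⟨hx, hy, by omega, by omega⟩⟩

lemma exists_isThroughPair_iff_right (htL : t ≤ #(freePoints L)) :
    (∃ x, IsThroughPair L R t x y) ↔ y ∈ freePoints R ∧ freeRank R y < t := by
  refine ⟨fun ⟨x, _, hy, _, hlt⟩ => ⟨hy, hlt⟩, fun ⟨hy, hlt⟩ => ?_⟩
  obtain ⟨x, hx, hrank⟩ := exists_card_filter_lt_eq (s := freePoints L)
    (i := #(freePoints L) - freeRank R y - 1) (by omega)
  change freeRank L x = _ at hrank
  exact ⟨x, ⟨hx, hy, by omega, hlt⟩⟩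

lemma IsThroughPair.exists_of_lt_left (h : IsThroughPair L R t x y)
    (htR : t ≤ #(freePoints R)) (hz : L z = z) (hxz : x < z) :
    ∃ y', IsThroughPair L R t z y' := by
  have hz' : z ∈ freePoints L := mem_freePoints.2 hz
  have hrank : freeRank L x < freeRank L z := card_filter_lt_lt_of_lt h.mem_left hxz
  have := h.freeRank_add; have := h.freeRank_lt
  exact (exists_isThroughPair_iff_left htR).2 ⟨hz', by omega⟩

lemma IsThroughPair.exists_of_lt_right (h : IsThroughPair L R t x y)
    (htL : t ≤ #(freePoints L)) (hu : R u = u) (huy : u < y) :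
    ∃ x', IsThroughPair L R t x' u := by
  have hu' : u ∈ freePoints R := mem_freePoints.2 hu
  have hrank : freeRank R u < freeRank R y := card_filter_lt_lt_of_lt hu' huy
  have := h.freeRank_lt
  exact (exists_isThroughPair_iff_right htL).2 ⟨hu', by omega⟩

noncomputable def glue (L : Fin n → Fin n) (R : Fin m → Fin m) (t : ℕ) :
    Fin (n + m) → Fin (n + m) :=
  Fin.addCases
    (fun x => if h : ∃ y, IsThroughPair L R t x y then Fin.natAdd n h.choose
      else Fin.castAdd m (L x))
    (fun y => if h : ∃ x, IsThroughPair L R t x y then Fin.castAdd m h.choose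
      else Fin.natAdd n (R y))

lemma glue_castAdd_of_isThroughPair (h : IsThroughPair L R t x y) :
    glue L R t (Fin.castAdd m x) = Fin.natAdd n y := by
  have hex : ∃ y, IsThroughPair L R t x y := ⟨y, h⟩
  rw [glue, Fin.addCases_left, dif_pos hex, hex.choose_spec.right_unique h]

lemma glue_natAdd_of_isThroughPair (h : IsThroughPair L R t x y) :
    glue L R t (Fin.natAdd n y) = Fin.castAdd m x := by
  have hex : ∃ x, IsThroughPair L R t x y := ⟨x, h⟩
  rw [glue, Fin.addCases_right, dif_pos hex, hex.choose_spec.left_unique h]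

lemma glue_castAdd_of_forall_not (h : ∀ y, ¬ IsThroughPair L R t x y) :
    glue L R t (Fin.castAdd m x) = Fin.castAdd m (L x) := by
  rw [glue, Fin.addCases_left, dif_neg (not_exists.2 h)]

lemma glue_natAdd_of_forall_not (h : ∀ x, ¬ IsThroughPair L R t x y) :
    glue L R t (Fin.natAdd n y) = Fin.natAdd n (R y) := by
  rw [glue, Fin.addCases_right, dif_neg (not_exists.2 h)]

lemma glue_castAdd_of_ne (hx : L x ≠ x) : glue L R t (Fin.castAdd m x) = Fin.castAdd m (L x) :=
  glue_castAdd_of_forall_not fun _ h => hx (mem_freePoints.1 h.mem_left)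

lemma glue_natAdd_of_ne (hy : R y ≠ y) : glue L R t (Fin.natAdd n y) = Fin.natAdd n (R y) :=
  glue_natAdd_of_forall_not fun _ h => hy (mem_freePoints.1 h.mem_right)

lemma cutLeft_glue : cutLeft (glue L R t) = L := by
  funext x
  by_cases h : ∃ y, IsThroughPair L R t x y
  · obtain ⟨y, hxy⟩ := h
    rw [cutLeft_of_le (by simp [glue_castAdd_of_isThroughPair hxy]),
      mem_freePoints.1 hxy.mem_left]
  · exact cutLeft_of_eq (glue_castAdd_of_forall_not (not_exists.1 h))

lemma cutRight_glue : cutRight (glue L R t) = R := by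
  funext y
  by_cases h : ∃ x, IsThroughPair L R t x y
  · obtain ⟨x, hxy⟩ := h
    rw [cutRight_of_lt (by simp [glue_natAdd_of_isThroughPair hxy]),
      mem_freePoints.1 hxy.mem_right]
  · exact cutRight_of_eq (glue_natAdd_of_forall_not (not_exists.1 h))

lemma crossCount_glue (htL : t ≤ #(freePoints L)) (htR : t ≤ #(freePoints R)) :
    crossCount (glue L R t) = t := by
  have hcross :
      ∀ x, n ≤ (glue L R t (Fin.castAdd m x) : ℕ) ↔ ∃ y, IsThroughPair L R t x y := by
    intro x
    by_cases h : ∃ y, IsThroughPair L R t x y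
    · obtain ⟨y, hxy⟩ := h
      simp only [glue_castAdd_of_isThroughPair hxy, Fin.val_natAdd, le_add_iff_nonneg_right,
        zero_le, true_iff]
      exact ⟨y, hxy⟩
    · simp only [glue_castAdd_of_forall_not (not_exists.1 h), Fin.val_castAdd, h, iff_false,
        not_le, Fin.is_lt]
  rw [crossCount_eq_card_left]
  simp_rw [hcross, exists_isThroughPair_iff_left htR]
  rw [← filter_filter, filter_mem_eq_inter, univ_inter]
  exact card_filter_card_le_card_filter_lt_add htL

lemma glue_involutive (hL : Involutive L) (hR : Involutive R) : Involutive (glue L R t) := by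
  intro v
  induction v using Fin.addCases with
  | left x =>
    by_cases h : ∃ y, IsThroughPair L R t x y
    · obtain ⟨y, hxy⟩ := h
      rw [glue_castAdd_of_isThroughPair hxy, glue_natAdd_of_isThroughPair hxy]
    · by_cases hx : L x = x
      · rw [glue_castAdd_of_forall_not (not_exists.1 h), hx,
          glue_castAdd_of_forall_not (not_exists.1 h), hx]
      · rw [glue_castAdd_of_ne hx, glue_castAdd_of_ne (by rwa [hL x, ne_comm]), hL x]
  | right y =>
    by_cases h : ∃ x, IsThroughPair L R t x y
    · obtain ⟨x, hxy⟩ := h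
      rw [glue_natAdd_of_isThroughPair hxy, glue_castAdd_of_isThroughPair hxy]
    · by_cases hy : R y = y
      · rw [glue_natAdd_of_forall_not (not_exists.1 h), hy,
          glue_natAdd_of_forall_not (not_exists.1 h), hy]
      · rw [glue_natAdd_of_ne hy, glue_natAdd_of_ne (by rwa [hR y, ne_comm]), hR y]

end Glue

section GlueNoncrossing

variable {n m : ℕ} {L : Fin n → Fin n} {R : Fin m → Fin m} {t : ℕ}
  {x z : Fin n} {y u : Fin m}

lemma glue_castAdd_mem_Ioo_of_isThroughPair (hL : IsNoncrossing L) (htR : t ≤ #(freePoints R))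
    (h : IsThroughPair L R t x y) (hxz : x < z) :
    glue L R t (Fin.castAdd m z) ≠ Fin.castAdd m z ∧
      glue L R t (Fin.castAdd m z) ∈ Set.Ioo (Fin.castAdd m x) (Fin.natAdd n y) := by
  by_cases hz : ∃ y', IsThroughPair L R t z y'
  · obtain ⟨y', hzy'⟩ := hz
    have hy' : y' < y := (h.lt_iff_lt hzy').1 hxz
    rw [glue_castAdd_of_isThroughPair hzy']
    simp only [Set.mem_Ioo, ne_eq, Fin.ext_iff, Fin.lt_def, Fin.val_castAdd,
      Fin.val_natAdd] at hy' ⊢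
    omega
  · have hLz : L z ≠ z := fun hLz => hz (h.exists_of_lt_left htR hLz hxz)
    have hxLz : x < L z := hL.lt_apply_of_lt (mem_freePoints.1 h.mem_left) hxz
    rw [glue_castAdd_of_ne hLz]
    simp only [Set.mem_Ioo, ne_eq, Fin.ext_iff, Fin.lt_def, Fin.val_castAdd,
      Fin.val_natAdd] at hLz hxLz ⊢
    omega

lemma glue_natAdd_mem_Ioo_of_isThroughPair (hR : IsNoncrossing R) (htL : t ≤ #(freePoints L))
    (h : IsThroughPair L R t x y) (huy : u < y) :
    glue L R t (Fin.natAdd n u) ≠ Fin.natAdd n u ∧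
      glue L R t (Fin.natAdd n u) ∈ Set.Ioo (Fin.castAdd m x) (Fin.natAdd n y) := by
  by_cases hu : ∃ x', IsThroughPair L R t x' u
  · obtain ⟨x', hx'u⟩ := hu
    have hx' : x < x' := (h.lt_iff_lt hx'u).2 huy
    rw [glue_natAdd_of_isThroughPair hx'u]
    simp only [Set.mem_Ioo, ne_eq, Fin.ext_iff, Fin.lt_def, Fin.val_castAdd,
      Fin.val_natAdd] at hx' ⊢
    omega
  · have hRu : R u ≠ u := fun hRu => hu (h.exists_of_lt_right htL hRu huy)
    have hRuy : R u < y := hR.apply_lt_of_lt (mem_freePoints.1 h.mem_right) huy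
    rw [glue_natAdd_of_ne hRu]
    simp only [Set.mem_Ioo, ne_eq, Fin.ext_iff, Fin.lt_def, Fin.val_castAdd,
      Fin.val_natAdd] at hRu hRuy ⊢
    omega

lemma glue_mem_Ioo_of_isThroughPair (hL : IsNoncrossing L) (hR : IsNoncrossing R)
    (htL : t ≤ #(freePoints L)) (htR : t ≤ #(freePoints R)) (h : IsThroughPair L R t x y)
    {w : Fin (n + m)} (hw : w ∈ Set.Ioo (Fin.castAdd m x) (Fin.natAdd n y)) :
    glue L R t w ≠ w ∧ glue L R t w ∈ Set.Ioo (Fin.castAdd m x) (Fin.natAdd n y) := by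
  induction w using Fin.addCases with
  | left z =>
    refine glue_castAdd_mem_Ioo_of_isThroughPair hL htR h (Fin.lt_def.2 ?_)
    simpa only [Fin.lt_def, Fin.val_castAdd] using hw.1
  | right u =>
    refine glue_natAdd_mem_Ioo_of_isThroughPair hR htL h (Fin.lt_def.2 ?_)
    simpa only [Fin.lt_def, Fin.val_natAdd, add_lt_add_iff_left] using hw.2

lemma glue_mem_Ioo_castAdd (hL : IsNoncrossing L)
    {w : Fin (n + m)} (hw : w ∈ Set.Ioo (Fin.castAdd m x) (Fin.castAdd m (L x))) :
    glue L R t w ≠ w ∧ glue L R t w ∈ Set.Ioo (Fin.castAdd m x) (Fin.castAdd m (L x)) := by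
  induction w using Fin.addCases with
  | left z =>
    obtain ⟨hLz, hLz'⟩ := hL.nested x z (by
      simpa only [Set.mem_Ioo, Fin.lt_def, Fin.val_castAdd] using hw)
    rw [glue_castAdd_of_ne hLz]
    simp only [Set.mem_Ioo, ne_eq, Fin.ext_iff, Fin.lt_def, Fin.val_castAdd] at hLz hLz' ⊢
    omega
  | right u =>
    have := Fin.lt_def.1 hw.2
    simp only [Fin.val_castAdd, Fin.val_natAdd] at this
    omega

lemma glue_mem_Ioo_natAdd (hR : IsNoncrossing R)
    {w : Fin (n + m)} (hw : w ∈ Set.Ioo (Fin.natAdd n y) (Fin.natAdd n (R y))) :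
    glue L R t w ≠ w ∧ glue L R t w ∈ Set.Ioo (Fin.natAdd n y) (Fin.natAdd n (R y)) := by
  induction w using Fin.addCases with
  | left z =>
    have := Fin.lt_def.1 hw.1
    simp only [Fin.val_castAdd, Fin.val_natAdd] at this
    omega
  | right u =>
    obtain ⟨hRu, hRu'⟩ := hR.nested y u (by
      simpa only [Set.mem_Ioo, Fin.lt_def, Fin.val_natAdd, add_lt_add_iff_left] using hw)
    rw [glue_natAdd_of_ne hRu]
    simp only [Set.mem_Ioo, ne_eq, Fin.ext_iff, Fin.lt_def, Fin.val_natAdd] at hRu hRu' ⊢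
    omega

lemma IsNoncrossing.glue (hL : IsNoncrossing L) (hR : IsNoncrossing R)
    (htL : t ≤ #(freePoints L)) (htR : t ≤ #(freePoints R)) : IsNoncrossing (glue L R t) := by
  refine ⟨glue_involutive hL.involutive hR.involutive, fun v w hw => ?_⟩
  induction v using Fin.addCases with
  | left x =>
    by_cases h : ∃ y, IsThroughPair L R t x y
    · obtain ⟨y, hxy⟩ := h
      rw [glue_castAdd_of_isThroughPair hxy] at hw ⊢
      exact glue_mem_Ioo_of_isThroughPair hL hR htL htR hxy hw
    · rw [glue_castAdd_of_forall_not (not_exists.1 h)] at hw ⊢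
      exact glue_mem_Ioo_castAdd hL hw
  | right y =>
    by_cases h : ∃ x, IsThroughPair L R t x y
    · obtain ⟨x, hxy⟩ := h
      rw [glue_natAdd_of_isThroughPair hxy] at hw
      have := Fin.lt_def.1 (hw.1.trans hw.2)
      simp only [Fin.val_castAdd, Fin.val_natAdd] at this
      omega
    · rw [glue_natAdd_of_forall_not (not_exists.1 h)] at hw ⊢
      exact glue_mem_Ioo_natAdd hR hw

end GlueNoncrossing

section CutGlue

variable {n m : ℕ} {f : Fin (n + m) → Fin (n + m)} {x : Fin n} {y : Fin m}

/-- `f` maps the through strands starting above `x` onto those ending below `y`, because they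
are exactly the strands passing under the strand joining `x` and `y`. -/
lemma card_through_gt_eq_card_through_lt (hf : IsNoncrossing f)
    (h : f (Fin.castAdd m x) = Fin.natAdd n y) :
    #{z : Fin n | x < z ∧ n ≤ (f (Fin.castAdd m z) : ℕ)} =
      #{u : Fin m | u < y ∧ (f (Fin.natAdd n u) : ℕ) < n} := by
  have hl : #{z : Fin n | x < z ∧ n ≤ (f (Fin.castAdd m z) : ℕ)} =
      #{v : Fin (n + m) | (x : ℕ) < v ∧ (v : ℕ) < n ∧ n ≤ (f v : ℕ)} := by
    rw [card_filter_castAdd _ fun _ h => h.2.1]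
    simp only [Fin.lt_def, Fin.val_castAdd, Fin.is_lt, true_and]
  have hr : #{u : Fin m | u < y ∧ (f (Fin.natAdd n u) : ℕ) < n} =
      #{v : Fin (n + m) | n ≤ (v : ℕ) ∧ (v : ℕ) < n + y ∧ (f v : ℕ) < n} := by
    rw [card_filter_natAdd _ fun _ h => h.1]
    simp only [Fin.lt_def, Fin.val_natAdd, le_add_iff_nonneg_right, zero_le, true_and,
      add_lt_add_iff_left]
  have hIoo : ∀ v : Fin (n + m), (x : ℕ) < v → (v : ℕ) < n + y →
      (x : ℕ) < f v ∧ (f v : ℕ) < n + y := by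
    intro v h1 h2
    have := (hf.nested (Fin.castAdd m x) v (by
      rw [h, Set.mem_Ioo, Fin.lt_def, Fin.lt_def, Fin.val_castAdd, Fin.val_natAdd]
      exact ⟨h1, h2⟩)).2
    rwa [h, Set.mem_Ioo, Fin.lt_def, Fin.lt_def, Fin.val_castAdd, Fin.val_natAdd] at this
  rw [hl, hr]
  refine card_nbij' f f (fun v hv => ?_) (fun v hv => ?_) (fun v _ => hf.involutive v)
    (fun v _ => hf.involutive v)
  · simp only [coe_filter, mem_univ, true_and, Set.mem_ofPred_eq] at hv ⊢
    have := hIoo v hv.1 (by omega)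
    rw [hf.involutive]
    omega
  · simp only [coe_filter, mem_univ, true_and, Set.mem_ofPred_eq] at hv ⊢
    have := hIoo v (by omega) hv.2.1
    rw [hf.involutive]
    omega

lemma card_filter_freePoints_cutLeft_gt (hf : IsNoncrossing f)
    (h : f (Fin.castAdd m x) = Fin.natAdd n y) :
    #{z ∈ freePoints (cutLeft f) | x < z} =
      #{z : Fin n | x < z ∧ n ≤ (f (Fin.castAdd m z) : ℕ)} := by
  rw [freePoints, filter_filter]
  refine congrArg card (filter_congr fun z _ => ?_)
  have hcov : x < z → f (Fin.castAdd m z) ≠ Fin.castAdd m z := fun hz hfix =>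
    hf.notMem_Ioo_of_apply_eq_self (a := Fin.castAdd m x) hfix
      ⟨by rw [Fin.lt_def, Fin.val_castAdd, Fin.val_castAdd]; exact hz,
        by rw [h, Fin.lt_def, Fin.val_castAdd, Fin.val_natAdd]; omega⟩
  rw [cutLeft_eq_self_iff]
  tauto

lemma freeRank_cutRight_of_apply_castAdd (hf : IsNoncrossing f)
    (h : f (Fin.castAdd m x) = Fin.natAdd n y) :
    freeRank (cutRight f) y = #{u : Fin m | u < y ∧ (f (Fin.natAdd n u) : ℕ) < n} := by
  rw [freeRank, freePoints, filter_filter]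
  refine congrArg card (filter_congr fun u _ => ?_)
  have hcov : u < y → f (Fin.natAdd n u) ≠ Fin.natAdd n u := fun hu hfix =>
    hf.notMem_Ioo_of_apply_eq_self (a := Fin.castAdd m x) hfix
      ⟨by rw [Fin.lt_def, Fin.val_castAdd, Fin.val_natAdd]; omega,
        by rw [h, Fin.lt_def, Fin.val_natAdd, Fin.val_natAdd]; exact Nat.add_lt_add_left hu n⟩
  rw [cutRight_eq_self_iff]
  tauto

lemma isThroughPair_cut (hf : IsNoncrossing f) (h : f (Fin.castAdd m x) = Fin.natAdd n y) :
    IsThroughPair (cutLeft f) (cutRight f) (crossCount f) x y := by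
  have hy : f (Fin.natAdd n y) = Fin.castAdd m x := by rw [← h, hf.involutive]
  have hxL : x ∈ freePoints (cutLeft f) :=
    mem_freePoints.2 (cutLeft_eq_self_iff.2 (Or.inr (by simp [h])))
  have hyR : y ∈ freePoints (cutRight f) :=
    mem_freePoints.2 (cutRight_eq_self_iff.2 (Or.inr (by simp [hy])))
  have hlt : #{z : Fin n | x < z ∧ n ≤ (f (Fin.castAdd m z) : ℕ)} < crossCount f := by
    rw [crossCount_eq_card_left]
    refine card_lt_card ((ssubset_iff_of_subset fun z hz => ?_).2 ⟨x, ?_, ?_⟩)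
    · simp only [mem_filter, mem_univ, true_and] at hz ⊢
      exact hz.2
    · simp [h]
    · simp
  have hsplit := card_filter_lt_add_card_filter_gt hxL
  rw [card_filter_freePoints_cutLeft_gt hf h, card_through_gt_eq_card_through_lt hf h,
    ← freeRank_cutRight_of_apply_castAdd hf h] at hsplit
  rw [card_through_gt_eq_card_through_lt hf h, ← freeRank_cutRight_of_apply_castAdd hf h] at hlt
  exact ⟨hxL, hyR, hsplit, hlt⟩

lemma not_isThroughPair_cut_of_left (hf : IsNoncrossing f)
    (hx : f (Fin.castAdd m x) = Fin.castAdd m x) (y : Fin m) :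
    ¬ IsThroughPair (cutLeft f) (cutRight f) (crossCount f) x y := by
  rintro ⟨hxL, -, hsum, hlt⟩
  have hsplit := card_filter_lt_add_card_filter_gt hxL
  have hle : crossCount f ≤ #{z ∈ freePoints (cutLeft f) | x < z} := by
    rw [crossCount_eq_card_left]
    refine card_le_card fun z hz => ?_
    simp only [mem_filter, mem_univ, true_and] at hz ⊢
    refine ⟨mem_freePoints.2 (cutLeft_eq_self_iff.2 (Or.inr hz)), ?_⟩
    by_contra! hzx
    rcases hzx.lt_or_eq with hzx | rfl
    · refine hf.notMem_Ioo_of_apply_eq_self (a := Fin.castAdd m z) hx ⟨?_, ?_⟩ <;>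
        simp only [Fin.lt_def, Fin.val_castAdd] <;> omega
    · rw [hx, Fin.val_castAdd] at hz
      omega
  simp only [freeRank] at hsum hlt
  omega

lemma not_isThroughPair_cut_of_right (hf : IsNoncrossing f)
    (hy : f (Fin.natAdd n y) = Fin.natAdd n y) (x : Fin n) :
    ¬ IsThroughPair (cutLeft f) (cutRight f) (crossCount f) x y := by
  rintro ⟨-, -, -, hlt⟩
  have hle : crossCount f ≤ freeRank (cutRight f) y := by
    rw [crossCount_eq_card_right hf.involutive, freeRank]
    refine card_le_card fun u hu => ?_
    simp only [mem_filter, mem_univ, true_and] at hu ⊢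
    refine ⟨mem_freePoints.2 (cutRight_eq_self_iff.2 (Or.inr hu)), ?_⟩
    by_contra! hyu
    rcases hyu.lt_or_eq with hyu | rfl
    · refine hf.notMem_Ioo_of_apply_eq_self (a := f (Fin.natAdd n u)) hy ⟨?_, ?_⟩ <;>
        simp only [hf.involutive _, Fin.lt_def, Fin.val_natAdd, add_lt_add_iff_left] <;> omega
    · rw [hy, Fin.val_natAdd] at hu
      omega
  omega

lemma glue_cut (hf : IsNoncrossing f) : glue (cutLeft f) (cutRight f) (crossCount f) = f := by
  funext v
  induction v using Fin.addCases with
  | left x =>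
    by_cases hx : n ≤ (f (Fin.castAdd m x) : ℕ)
    · have h : f (Fin.castAdd m x) = Fin.natAdd n ⟨f (Fin.castAdd m x) - n, by omega⟩ :=
        Fin.ext (by simp; omega)
      rw [glue_castAdd_of_isThroughPair (isThroughPair_cut hf h), ← h]
    · obtain ⟨z, hz⟩ : ∃ z, f (Fin.castAdd m x) = Fin.castAdd m z :=
        ⟨⟨_, not_le.1 hx⟩, Fin.ext (by simp)⟩
      rw [hz]
      by_cases hzx : z = x
      · subst hzx
        rw [glue_castAdd_of_forall_not (not_isThroughPair_cut_of_left hf hz), cutLeft_of_eq hz]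
      · rw [glue_castAdd_of_ne (by rwa [cutLeft_of_eq hz]), cutLeft_of_eq hz]
  | right y =>
    by_cases hy : (f (Fin.natAdd n y) : ℕ) < n
    · have h : f (Fin.natAdd n y) = Fin.castAdd m ⟨f (Fin.natAdd n y), hy⟩ := Fin.ext (by simp)
      have h' : f (Fin.castAdd m ⟨f (Fin.natAdd n y), hy⟩) = Fin.natAdd n y := by
        rw [← h, hf.involutive]
      rw [glue_natAdd_of_isThroughPair (isThroughPair_cut hf h'), ← h]
    · obtain ⟨u, hu⟩ : ∃ u, f (Fin.natAdd n y) = Fin.natAdd n u :=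
        ⟨⟨f (Fin.natAdd n y) - n, by omega⟩, Fin.ext (by simp; omega)⟩
      rw [hu]
      by_cases huy : u = y
      · subst huy
        rw [glue_natAdd_of_forall_not (not_isThroughPair_cut_of_right hf hu), cutRight_of_eq hu]
      · rw [glue_natAdd_of_ne (by rwa [cutRight_of_eq hu]), cutRight_of_eq hu]

theorem card_noncrossing_fin_add (t j : ℕ) :
    #{f : Fin (n + m) → Fin (n + m) |
        IsNoncrossing f ∧ crossCount f = t ∧ #(freePoints f) = j} =
      #{p : (Fin n → Fin n) × (Fin m → Fin m) | IsNoncrossing p.1 ∧ IsNoncrossing p.2 ∧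
        t ≤ #(freePoints p.1) ∧ t ≤ #(freePoints p.2) ∧
        #(freePoints p.1) + #(freePoints p.2) = j + 2 * t} := by
  refine card_nbij' (fun f => (cutLeft f, cutRight f)) (fun p => glue p.1 p.2 t) ?_ ?_ ?_ ?_
  · intro f hf
    simp only [coe_filter, mem_univ, true_and, Set.mem_ofPred_eq] at hf ⊢
    obtain ⟨hf, rfl, rfl⟩ := hf
    exact ⟨hf.restrict ordConnected_range_castAddOrderEmb,
      hf.restrict ordConnected_range_natAddOrderEmb, crossCount_le_card_freePoints_cutLeft,
      crossCount_le_card_freePoints_cutRight hf.involutive,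
      (card_freePoints_add_two_mul_crossCount hf.involutive).symm⟩
  · rintro ⟨L, R⟩ hp
    simp only [coe_filter, mem_univ, true_and, Set.mem_ofPred_eq] at hp ⊢
    obtain ⟨hL, hR, htL, htR, hsum⟩ := hp
    have hg := hL.glue hR htL htR
    have := card_freePoints_add_two_mul_crossCount hg.involutive
    rw [cutLeft_glue, cutRight_glue, crossCount_glue htL htR] at this
    exact ⟨hg, crossCount_glue htL htR, by omega⟩
  · intro f hf
    simp only [coe_filter, mem_univ, true_and, Set.mem_ofPred_eq] at hf
    obtain ⟨hf, rfl, -⟩ := hf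
    exact glue_cut hf
  · rintro ⟨L, R⟩ -
    simp only [cutLeft_glue, cutRight_glue]

end CutGlue

/-- The number of walks of `n` steps `±1` from height `0` to height `k` that never go below `0`. -/
def ballot : ℕ → ℕ → ℕ
  | 0, 0 => 1
  | 0, _ + 1 => 0
  | n + 1, 0 => ballot n 1
  | n + 1, k + 1 => ballot n k + ballot n (k + 2)

section Ballot

lemma ballot_succ_zero (n : ℕ) : ballot (n + 1) 0 = ballot n 1 := rfl

lemma ballot_succ_succ (n k : ℕ) : ballot (n + 1) (k + 1) = ballot n k + ballot n (k + 2) := rfl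

lemma ballot_eq_zero_of_lt {n k : ℕ} (h : n < k) : ballot n k = 0 := by
  induction n generalizing k with
  | zero => obtain ⟨k, rfl⟩ := Nat.exists_eq_add_of_lt h; rfl
  | succ n ih =>
    obtain ⟨k, rfl⟩ := Nat.exists_eq_add_of_lt (Nat.zero_lt_of_lt h)
    rw [zero_add, ballot_succ_succ, ih (by omega), ih (by omega)]

lemma ballot_self (n : ℕ) : ballot n n = 1 := by
  induction n with
  | zero => rfl
  | succ n ih => rw [ballot_succ_succ, ih, ballot_eq_zero_of_lt (by omega)]

lemma ballot_add_two_mul (k j : ℕ) :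
    (ballot (k + 2 * j) k : ℤ) =
      (k + 2 * j).choose j - if j = 0 then 0 else ((k + 2 * j).choose (j - 1) : ℤ) := by
  induction j generalizing k with
  | zero => simp [ballot_self]
  | succ j ihj =>
    induction k with
    | zero =>
      have hrec : ballot (0 + 2 * (j + 1)) 0 = ballot (1 + 2 * j) 1 := by
        rw [show 0 + 2 * (j + 1) = (1 + 2 * j) + 1 by ring, ballot_succ_zero]
      rw [hrec, ihj 1, if_neg j.succ_ne_zero, Nat.add_sub_cancel]
      rcases j with _ | j
      · decide
      · rw [if_neg j.succ_ne_zero, Nat.add_sub_cancel,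
          show 1 + 2 * (j + 1) = 2 * j + 3 by ring,
          show 0 + 2 * (j + 1 + 1) = 2 * j + 3 + 1 by ring]
        have p1 := Nat.choose_succ_succ' (2 * j + 3) (j + 1)
        have p2 := Nat.choose_succ_succ' (2 * j + 3) j
        have p3 : (2 * j + 3).choose (j + 1 + 1) = (2 * j + 3).choose (j + 1) :=
          Nat.choose_symm_of_eq_add (by ring)
        rw [p1, p2, p3]
        push_cast
        ring
    | succ k ihk =>
      rw [show k + 1 + 2 * (j + 1) = (k + 2 * (j + 1)) + 1 by ring, ballot_succ_succ,
        Nat.cast_add, ihk, show k + 2 * (j + 1) = (k + 2) + 2 * j by ring, ihj (k + 2),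
        if_neg j.succ_ne_zero, Nat.add_sub_cancel, Nat.choose_succ_succ' _ j]
      rcases j with _ | j
      · simp
      · rw [if_neg j.succ_ne_zero, Nat.add_sub_cancel, Nat.choose_succ_succ' _ j]
        push_cast
        ring

lemma ballot_two_mul_zero (N : ℕ) : ballot (2 * N) 0 = catalan N := by
  rcases N with _ | N
  · rw [mul_zero, catalan_zero]
    rfl
  have hclosed := ballot_add_two_mul 0 (N + 1)
  rw [zero_add, if_neg N.succ_ne_zero, Nat.add_sub_cancel] at hclosed
  have hcat := succ_mul_catalan_eq_centralBinom (N + 1)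
  rw [Nat.centralBinom_eq_two_mul_choose] at hcat
  have hratio := Nat.choose_succ_right_eq (2 * (N + 1)) N
  rw [show 2 * (N + 1) - N = N + 2 by omega] at hratio
  have hpos : (0 : ℤ) < N + 2 := by positivity
  zify at hcat hratio ⊢
  refine (mul_left_cancel₀ hpos.ne' ?_ :)
  linear_combination (N + 2 : ℤ) * hclosed - hcat + hratio

end Ballot

section Count

lemma card_noncrossing_succ_crossCount (n t k : ℕ) :
    #{f : Fin (n + 1) → Fin (n + 1) |
        IsNoncrossing f ∧ crossCount f = t ∧ #(freePoints f) = k} =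
      #{L : Fin n → Fin n | IsNoncrossing L ∧
        t ≤ #(freePoints L) ∧ t ≤ 1 ∧ #(freePoints L) + 1 = k + 2 * t} := by
  have hR : ∀ R : Fin 1 → Fin 1, IsNoncrossing R ∧ #(freePoints R) = 1 := by
    intro R
    rw [Subsingleton.elim R id]
    exact ⟨isNoncrossing_id, by simp [freePoints]⟩
  have hprod : ({p : (Fin n → Fin n) × (Fin 1 → Fin 1) | IsNoncrossing p.1 ∧
      IsNoncrossing p.2 ∧ t ≤ #(freePoints p.1) ∧ t ≤ #(freePoints p.2) ∧
      #(freePoints p.1) + #(freePoints p.2) = k + 2 * t} : Finset _) =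
      ({L : Fin n → Fin n | IsNoncrossing L ∧
        t ≤ #(freePoints L) ∧ t ≤ 1 ∧ #(freePoints L) + 1 = k + 2 * t} : Finset _) ×ˢ
        univ := by
    ext ⟨L, R⟩
    simp only [mem_filter, mem_univ, true_and, mem_product, and_true, (hR R).1, (hR R).2]
  rw [card_noncrossing_fin_add, hprod, card_product, card_univ, Fintype.card_unique, mul_one]

theorem card_noncrossing_eq_ballot (n k : ℕ) :
    #{f : Fin n → Fin n | IsNoncrossing f ∧ #(freePoints f) = k} = ballot n k := by
  induction n generalizing k with
  | zero =>
    have hall : ∀ f : Fin 0 → Fin 0, IsNoncrossing f ∧ #(freePoints f) = 0 :=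
      fun f => ⟨⟨fun a => a.elim0, fun a => a.elim0⟩,
        card_eq_zero.2 (eq_empty_of_isEmpty _)⟩
    rcases k with _ | k
    · rw [filter_true_of_mem fun f _ => hall f]
      rfl
    · rw [filter_false_of_mem fun f _ h => by have := (hall f).2; omega]
      rfl
  | succ n ih =>
    have hsplit : #{f : Fin (n + 1) → Fin (n + 1) | IsNoncrossing f ∧ #(freePoints f) = k} =
        ∑ t ∈ range 2, #{f : Fin (n + 1) → Fin (n + 1) |
          IsNoncrossing f ∧ crossCount f = t ∧ #(freePoints f) = k} := by
      rw [card_eq_sum_card_fiberwise (f := crossCount) (t := range 2) fun f hf =>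
        mem_range.2 (Nat.lt_succ_of_le (crossCount_le (mem_filter.1 hf).2.1.involutive))]
      refine sum_congr rfl fun t _ => ?_
      rw [filter_filter]
      exact congrArg card (filter_congr fun f _ => by tauto)
    rw [hsplit, sum_range_succ, sum_range_one, card_noncrossing_succ_crossCount,
      card_noncrossing_succ_crossCount]
    rcases k with _ | k
    · rw [filter_false_of_mem fun L _ h => by omega, card_empty, zero_add, ballot_succ_zero,
        ← ih 1]
      exact congrArg card (filter_congr fun L _ => and_congr_right fun _ => by omega)
    · rw [ballot_succ_succ, ← ih k, ← ih (k + 2)]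
      congr 1 <;> exact congrArg card (filter_congr fun L _ => and_congr_right fun _ => by omega)

end Count

section Diagram

variable {N : ℕ}

lemma diagPos_lt_iff (a : Fin (2 * N)) : diagPos N a < N ↔ (a : ℕ) < N := by
  have := a.isLt
  unfold diagPos
  split_ifs <;> omega

def boundaryEquiv (N : ℕ) : Fin (2 * N) ≃ Fin (N + N) where
  toFun a := ⟨diagPos N a, by have := a.isLt; unfold diagPos; split_ifs <;> omega⟩
  invFun v := ⟨if (v : ℕ) < N then v else 3 * N - 1 - v, by
    have := v.isLt; split_ifs <;> omega⟩
  left_inv a := Fin.ext (by have := a.isLt; simp only [diagPos]; split_ifs <;> omega)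
  right_inv v := Fin.ext (by have := v.isLt; simp only [diagPos]; split_ifs <;> omega)

lemma boundaryEquiv_val (a : Fin (2 * N)) : (boundaryEquiv N a : ℕ) = diagPos N a := rfl

def diagramEquiv (N : ℕ) : (Fin (2 * N) → Fin (2 * N)) ≃ (Fin (N + N) → Fin (N + N)) :=
  (boundaryEquiv N).arrowCongr (boundaryEquiv N)

lemma diagramEquiv_apply_boundaryEquiv (m : Fin (2 * N) → Fin (2 * N)) (a : Fin (2 * N)) :
    diagramEquiv N m (boundaryEquiv N a) = boundaryEquiv N (m a) := by
  simp [diagramEquiv]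

lemma isDiagram_iff (m : Fin (2 * N) → Fin (2 * N)) :
    IsDiagram N m ↔
      IsNoncrossing (diagramEquiv N m) ∧ #(freePoints (diagramEquiv N m)) = 0 := by
  have hsurj := (boundaryEquiv N).surjective
  have hg := diagramEquiv_apply_boundaryEquiv m
  have hlt : ∀ a b, diagPos N a < diagPos N b ↔ boundaryEquiv N a < boundaryEquiv N b :=
    fun _ _ => Iff.rfl
  have hne : (∀ a, m a ≠ a) ↔ ∀ v, diagramEquiv N m v ≠ v := by
    simp only [hsurj.forall, hg, ne_eq, EmbeddingLike.apply_eq_iff_eq]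
  have hinv : (∀ a, m (m a) = a) ↔ Involutive (diagramEquiv N m) := by
    simp only [Involutive, hsurj.forall, hg, EmbeddingLike.apply_eq_iff_eq]
  rw [card_eq_zero, freePoints, filter_eq_empty_iff]
  simp only [mem_univ, true_imp_iff, ← ne_eq]
  rw [← hne]
  refine ⟨fun ⟨hfree, hm, hnc⟩ => ⟨(isNoncrossing_iff_of_forall_ne (hne.1 hfree)).2
    ⟨hinv.1 hm, ?_⟩, hfree⟩, fun ⟨hf, hfree⟩ => ⟨hfree, hinv.2 hf.involutive, ?_⟩⟩
  · simp only [hsurj.forall, hg, ← hlt]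
    exact fun a c h1 h2 h3 => hnc a (m a) c (m c) h1 h2 h3 rfl rfl
  · rintro a b c d h1 h2 h3 rfl rfl
    rw [hlt] at h1 h2 h3
    rw [← hg] at h2 h3
    rw [← hg] at h3
    exact ((isNoncrossing_iff_of_forall_ne (hne.1 hfree)).1 hf).2 _ _ h1 h2 h3

lemma throughCount_eq_crossCount (m : Fin (2 * N) → Fin (2 * N)) :
    throughCount N m = crossCount (diagramEquiv N m) := by
  refine card_equiv (boundaryEquiv N) fun a => ?_
  simp only [mem_filter, mem_univ, true_and, diagramEquiv_apply_boundaryEquiv,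
    boundaryEquiv_val, ← not_lt, diagPos_lt_iff]

lemma card_diagram_throughCount (N k : ℕ) :
    Nat.card {m : Fin (2 * N) → Fin (2 * N) // IsDiagram N m ∧ throughCount N m = k} =
      #{g : Fin (N + N) → Fin (N + N) |
        IsNoncrossing g ∧ crossCount g = k ∧ #(freePoints g) = 0} := by
  rw [Nat.card_congr ((diagramEquiv N).subtypeEquiv (q := fun g =>
      IsNoncrossing g ∧ crossCount g = k ∧ #(freePoints g) = 0) fun m => by
      rw [isDiagram_iff, throughCount_eq_crossCount, and_assoc, and_comm (b := _ = k)]),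
    Nat.card_eq_fintype_card, Fintype.card_subtype]

lemma card_diagram_throughCount_eq_sq (N k : ℕ) :
    Nat.card {m : Fin (2 * N) → Fin (2 * N) // IsDiagram N m ∧ throughCount N m = k} =
      ballot N k ^ 2 := by
  have hprod : ({p : (Fin N → Fin N) × (Fin N → Fin N) | IsNoncrossing p.1 ∧
      IsNoncrossing p.2 ∧ k ≤ #(freePoints p.1) ∧ k ≤ #(freePoints p.2) ∧
      #(freePoints p.1) + #(freePoints p.2) = 0 + 2 * k} : Finset _) =
      ({L | IsNoncrossing L ∧ #(freePoints L) = k} : Finset _) ×ˢ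
        ({R | IsNoncrossing R ∧ #(freePoints R) = k} : Finset _) := by
    ext ⟨L, R⟩
    simp only [mem_filter, mem_univ, true_and, mem_product]
    constructor
    · rintro ⟨hL, hR, h1, h2, h3⟩
      exact ⟨⟨hL, by omega⟩, hR, by omega⟩
    · rintro ⟨⟨hL, h1⟩, hR, h2⟩
      exact ⟨hL, hR, by omega, by omega, by omega⟩
  rw [card_diagram_throughCount, card_noncrossing_fin_add, hprod, card_product,
    card_noncrossing_eq_ballot, sq]

lemma sum_card_diagram_throughCount (N : ℕ) :
    ∑ k ∈ range (N + 1),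
      Nat.card {m : Fin (2 * N) → Fin (2 * N) // IsDiagram N m ∧ throughCount N m = k} =
      catalan N := by
  have hfiber : ∀ k, #{g : Fin (N + N) → Fin (N + N) |
      IsNoncrossing g ∧ crossCount g = k ∧ #(freePoints g) = 0} =
      #{g ∈ ({g | IsNoncrossing g ∧ #(freePoints g) = 0} : Finset _) | crossCount g = k} :=
    fun k => by rw [filter_filter]; exact congrArg card (filter_congr fun g _ => by tauto)
  simp_rw [card_diagram_throughCount, hfiber]
  rw [← card_eq_sum_card_fiberwise fun g hg =>
      mem_range.2 (Nat.lt_succ_of_le (crossCount_le (mem_filter.1 hg).2.1.involutive)),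
    card_noncrossing_eq_ballot, ← two_mul, ballot_two_mul_zero]

end Diagram

/-- The number of planar diagrams on `N` strands with exactly `k` through-strands,
where `k ≡ N (mod 2)`, is `(C(N,(N-k)/2) - C(N,(N-k)/2 - 1))²` (with the convention
`C(N,-1) = 0`), and summing over all `k` recovers the Catalan number `C_N`. -/
theorem stmt_18 (N : ℕ) :
    (∀ k : ℕ, k ≤ N → k % 2 = N % 2 →
      (Nat.card {m : Fin (2*N) → Fin (2*N) // IsDiagram N m ∧ throughCount N m = k} : ℤ)
        = ((N.choose ((N - k) / 2) : ℤ) -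
            (if (N - k) / 2 = 0 then 0 else (N.choose ((N - k) / 2 - 1) : ℤ))) ^ 2) ∧
    ∑ k ∈ Finset.range (N + 1),
        Nat.card {m : Fin (2*N) → Fin (2*N) // IsDiagram N m ∧ throughCount N m = k}
      = catalan N := by
  refine ⟨fun k hk hpar => ?_, sum_card_diagram_throughCount N⟩
  obtain ⟨j, rfl⟩ : ∃ j, N = k + 2 * j := ⟨(N - k) / 2, by omega⟩
  rw [card_diagram_throughCount_eq_sq, show (k + 2 * j - k) / 2 = j by omega, Nat.cast_pow,
    ballot_add_two_mul]
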